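/- arXiv:2512.21923 — 3 statements merged into one kernel-verified Lean document; each statement's English description precedes it below -/
import Mathlib

section
/- Let q ∈ (0,1), m ≥ 1 an integer, and F a continuous CDF. Define R(b) = (V - b)(1 - ((q(1 - F(b)))/(1 - qF(b)))^m) for b ∈ [0, V]. If b* maximizes R(·; V) on [0, V], then for V' > V there exists a maximizer b** of R(·; V') on [0, V'] with b** ≥ b*; i.e., the optimal fee is nondecreasing in the valuation V. -/
/-- Monotone comparative statics: the optimal fee is nondecreasing in the valuation `V`. -/
theorem stmt3 (q : ℝ) (hq : q ∈ Set.Ioo (0:ℝ) 1) (m : ℕ) (hm : 1 ≤ m)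
    (F : ℝ → ℝ) (hFc : Continuous F) (hFmono : Monotone F)
    (hF01 : ∀ b, F b ∈ Set.Icc (0:ℝ) 1)
    (R : ℝ → ℝ → ℝ)
    (hR : ∀ V b, R V b = (V - b) * (1 - (q * (1 - F b) / (1 - q * F b)) ^ m))
    (V bstar : ℝ) (hb : bstar ∈ Set.Icc 0 V)
    (hmax : IsMaxOn (R V) (Set.Icc 0 V) bstar)
    (V' : ℝ) (hV' : V < V') :
    ∃ bss ∈ Set.Icc 0 V', IsMaxOn (R V') (Set.Icc 0 V') bss ∧ bstar ≤ bss := by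
  obtain ⟨hq0, hq1⟩ := hq
  set P : ℝ → ℝ := fun b => 1 - (q * (1 - F b) / (1 - q * F b)) ^ m with hP
  have hden : ∀ x, 0 < 1 - q * F x := by
    intro x
    have h1 := (hF01 x).2
    nlinarith
  have hgnn : ∀ x, 0 ≤ q * (1 - F x) / (1 - q * F x) := by
    intro x
    have h1 := (hF01 x).2
    exact div_nonneg (mul_nonneg hq0.le (by linarith)) (hden x).le
  have hPmono : ∀ a b, a ≤ b → P a ≤ P b := by
    intro a b hab
    have hF := hFmono hab
    have hgle : q * (1 - F b) / (1 - q * F b) ≤ q * (1 - F a) / (1 - q * F a) := by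
      rw [div_le_div_iff₀ (hden b) (hden a)]
      nlinarith [mul_nonneg (mul_nonneg hq0.le (sub_nonneg.2 hq1.le)) (sub_nonneg.2 hF)]
    have := pow_le_pow_left₀ (hgnn b) hgle m
    simp only [hP]
    linarith
  -- rewrite R
  have hRdec : ∀ W b, R W b = R V b + (W - V) * P b := by
    intro W b
    rw [hR, hR]
    ring
  -- continuity of R V'
  have hcont : Continuous (R V') := by
    have : R V' = fun b => (V' - b) * (1 - (q * (1 - F b) / (1 - q * F b)) ^ m) := by
      funext b; exact hR V' b
    rw [this]
    exact (continuous_const.sub continuous_id).mul (continuous_const.sub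
      (((continuous_const.mul (continuous_const.sub hFc)).div
        (continuous_const.sub (continuous_const.mul hFc))
        (fun x => ne_of_gt (hden x))).pow m))
  have hbV : bstar ≤ V := hb.2
  have hbV' : bstar ≤ V' := le_trans hbV hV'.le
  obtain ⟨bss, hbss, hmax'⟩ := (isCompact_Icc (a := bstar) (b := V')).exists_isMaxOn
    ⟨bstar, le_refl _, hbV'⟩ hcont.continuousOn
  refine ⟨bss, ⟨le_trans hb.1 hbss.1, hbss.2⟩, ?_, hbss.1⟩
  intro b hbmem
  rcases le_total b bstar with hle | hge
  · have hb0V : b ∈ Set.Icc 0 V := ⟨hbmem.1, le_trans hle hbV⟩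
    have h1 : R V b ≤ R V bstar := hmax hb0V
    have h2 : P b ≤ P bstar := hPmono b bstar hle
    have h3 : R V' b ≤ R V' bstar := by
      rw [hRdec V' b, hRdec V' bstar]
      nlinarith
    exact le_trans h3 (hmax' ⟨le_refl bstar, hbV'⟩)
  · exact hmax' ⟨hge, hbmem.2⟩
end

section
/- Let W: [0, V] → [0,1] be a nondecreasing right-continuous function (the winning-probability function at the final instant) and b ∈ [0, V] a fee. Define D = (V - b)W(b) - ∫₀^V (V - x) dW(x) restricted to x ≤ V (Lebesgue–Stieltjes integral). Then D ≤ 0, with equality attainable when b = V. Consequently, the strategy of waiting until the final instant and paying the minimal winning fee yields expected utility at least as large as committing in advance to any fixed fee b. -/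
/-! Since `W` vanishes left of `0`, `W b` is the `dW`-mass of `[0, b]`, so
`(V - b) W(b) = ∫_{[0,b]} (V - b) dW ≤ ∫_{[0,b]} (V - x) dW ≤ ∫_{[0,V]} (V - x) dW`,
the last step because `V - x ≥ 0` on `[0, V]`. -/

open MeasureTheory Set Function

lemma Function.leftLim_eq_of_forall_lt_eq {β : Type*} [TopologicalSpace β] [T2Space β]
    {f : ℝ → β} {a : ℝ} {c : β} (h : ∀ x < a, f x = c) : leftLim f a = c := by
  refine leftLim_eq_of_tendsto (tendsto_const_nhds.congr' ?_)
  filter_upwards [self_mem_nhdsWithin] with x hx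
  exact (h x hx).symm

lemma StieltjesFunction.measureReal_Icc (f : StieltjesFunction ℝ) {a b : ℝ} (hab : a ≤ b) :
    f.measure.real (Icc a b) = f b - leftLim f a := by
  rw [measureReal_def, f.measure_Icc, ENNReal.toReal_ofReal (sub_nonneg.2 (f.mono.leftLim_le hab))]

lemma mul_measureReal_Icc_le_setIntegral_Icc (μ : Measure ℝ) [IsLocallyFiniteMeasure μ]
    {a b V : ℝ} (hbV : b ≤ V) :
    (V - b) * μ.real (Icc a b) ≤ ∫ x in Icc a V, (V - x) ∂μ := by
  have hint : IntegrableOn (fun x => V - x) (Icc a V) μ :=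
    (continuous_const.sub continuous_id).integrableOn_Icc
  calc (V - b) * μ.real (Icc a b)
      ≤ ∫ x in Icc a b, (V - x) ∂μ := by
        rw [mul_comm]
        exact setIntegral_ge_of_const_le measurableSet_Icc measure_Icc_lt_top.ne
          (fun x hx => by linarith [hx.2]) (hint.mono_set (Icc_subset_Icc_right hbV))
    _ ≤ ∫ x in Icc a V, (V - x) ∂μ :=
        setIntegral_mono_set hint
          ((ae_restrict_iff' measurableSet_Icc).2 (ae_of_all _ fun x hx => sub_nonneg.2 hx.2))
          (ae_of_all _ (Icc_subset_Icc_right hbV))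

theorem stmt7_general (V b : ℝ) (hb : b ∈ Set.Icc 0 V)
    (W : StieltjesFunction ℝ)
    (hWneg : ∀ x < (0:ℝ), W x = 0) :
    (V - b) * W b - ∫ x in Set.Icc 0 V, (V - x) ∂W.measure ≤ 0 := by
  have hW0 : leftLim W 0 = 0 := leftLim_eq_of_forall_lt_eq hWneg
  have hWb : W.measure.real (Icc 0 b) = W b := by
    rw [W.measureReal_Icc hb.1, hW0, sub_zero]
  have key := mul_measureReal_Icc_le_setIntegral_Icc W.measure (a := 0) hb.2
  rw [hWb] at key
  linarith

/-- Core inequality of the PoS half of Theorem 1: committing in advance to a fixed fee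
`b` yields `(V-b)W(b)`, which is at most the prophet's payoff `∫ (V-x) dW(x)`;
i.e. `D = (V-b)W(b) - ∫₀^V (V-x) dW(x) ≤ 0`. -/
theorem stmt7 (V b : ℝ) (hV : 0 ≤ V) (hb : b ∈ Set.Icc 0 V)
    (W : StieltjesFunction ℝ) (hW01 : ∀ x, 0 ≤ W x ∧ W x ≤ 1)
    (hWneg : ∀ x < (0:ℝ), W x = 0) :
    (V - b) * W b - ∫ x in Set.Icc 0 V, (V - x) ∂W.measure ≤ 0 :=
  stmt7_general V b hb W hWneg
end

section
/- Consider two players alternately resetting the top fee: player 1 (strategic) waits times t₁¹, t₁², … and player 2 waits times t₂¹, t₂², …, with H_j = t₁^j + t₂^j, and a block arrives at an independent exponential time with CDF G(t) = 1 - e^{-λt}. Player 1 wins the (2r)-th interval event with probability ϖ_{2r} = G(Σ_{j=1}^r H_j) - G(Σ_{j=1}^{r-1} H_j + t₁^r). Then player 1's total winning probability Σ_r ϖ_{2r} is nonincreasing in each t₁^i (its partial derivative with respect to each t₁^i is ≤ 0), so it is maximized by taking every t₁^i → 0. -/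
/-!
Writing `S r = ∑_{j<r} (t₁ʲ + t₂ʲ)` for the start of round `r`, the `r`-th summand of the winning
probability factors as `e^{-λ (S r + t₁ʳ)} (1 - e^{-λ t₂ʳ})`: the first factor only decreases when any
waiting time of player 1 grows, and the second does not involve player 1 at all. So the summands
decrease termwise, and the sums compare because they are summable: each summand lies below the
telescoping increment `e^{-λ S r} - e^{-λ S (r+1)}`, whose partial sums are at most `1`.
-/

/-- Total probability that the block (Exp(λ) arrival) lands in one of the windows
during which the strategic player holds the top fee:
`P = Σ_r [G(Σ_{j≤r} H_j) - G(Σ_{j<r} H_j + t₁^r)]` with `H_j = t₁^j + t₂^j` and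
`G(t) = 1 - e^{-λt}`. -/
noncomputable def winProb (lam : ℝ) (t1 t2 : ℕ → ℝ) : ℝ :=
  ∑' r : ℕ,
    (Real.exp (-lam * (∑ j ∈ Finset.range r, (t1 j + t2 j) + t1 r)) -
      Real.exp (-lam * ∑ j ∈ Finset.range (r + 1), (t1 j + t2 j)))

open Finset Real

noncomputable def winTerm (lam : ℝ) (t1 t2 : ℕ → ℝ) (r : ℕ) : ℝ :=
  exp (-lam * (∑ j ∈ range r, (t1 j + t2 j) + t1 r)) -
    exp (-lam * ∑ j ∈ range (r + 1), (t1 j + t2 j))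

lemma winProb_eq_tsum_winTerm (lam : ℝ) (t1 t2 : ℕ → ℝ) :
    winProb lam t1 t2 = ∑' r, winTerm lam t1 t2 r := rfl

lemma exp_neg_mul_le_one {lam x : ℝ} (hlam : 0 ≤ lam) (hx : 0 ≤ x) : exp (-lam * x) ≤ 1 :=
  exp_le_one_iff.2 (mul_nonpos_of_nonpos_of_nonneg (neg_nonpos.2 hlam) hx)

section

variable {lam : ℝ} {t1 t2 : ℕ → ℝ}

lemma winTerm_eq_mul (r : ℕ) :
    winTerm lam t1 t2 r =
      exp (-lam * (∑ j ∈ range r, (t1 j + t2 j) + t1 r)) * (1 - exp (-lam * t2 r)) := by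
  rw [winTerm, sum_range_succ, mul_sub, mul_one, ← exp_add]
  ring_nf

lemma winTerm_nonneg (hlam : 0 ≤ lam) (ht2 : ∀ j, 0 ≤ t2 j) (r : ℕ) :
    0 ≤ winTerm lam t1 t2 r := by
  rw [winTerm_eq_mul]
  exact mul_nonneg (exp_nonneg _) (sub_nonneg.2 (exp_neg_mul_le_one hlam (ht2 r)))

lemma winTerm_le_sub (hlam : 0 ≤ lam) (ht1 : ∀ j, 0 ≤ t1 j) (r : ℕ) :
    winTerm lam t1 t2 r ≤
      exp (-lam * ∑ j ∈ range r, (t1 j + t2 j)) -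
        exp (-lam * ∑ j ∈ range (r + 1), (t1 j + t2 j)) := by
  refine sub_le_sub_right (exp_le_exp.2 ?_) _
  nlinarith [mul_nonneg hlam (ht1 r)]

lemma summable_winTerm (hlam : 0 ≤ lam) (ht1 : ∀ j, 0 ≤ t1 j) (ht2 : ∀ j, 0 ≤ t2 j) :
    Summable (winTerm lam t1 t2) := by
  refine summable_of_sum_range_le (c := 1) (winTerm_nonneg hlam ht2) fun n => ?_
  calc ∑ r ∈ range n, winTerm lam t1 t2 r
      ≤ ∑ r ∈ range n, (exp (-lam * ∑ j ∈ range r, (t1 j + t2 j)) -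
          exp (-lam * ∑ j ∈ range (r + 1), (t1 j + t2 j))) :=
        sum_le_sum fun r _ => winTerm_le_sub hlam ht1 r
    _ = 1 - exp (-lam * ∑ j ∈ range n, (t1 j + t2 j)) := by
        rw [sum_range_sub' (fun r => exp (-lam * ∑ j ∈ range r, (t1 j + t2 j)))]
        simp
    _ ≤ 1 := sub_le_self _ (exp_nonneg _)

lemma winTerm_antitone {t1' : ℕ → ℝ} (hlam : 0 ≤ lam) (ht2 : ∀ j, 0 ≤ t2 j) (h : t1 ≤ t1')
    (r : ℕ) : winTerm lam t1' t2 r ≤ winTerm lam t1 t2 r := by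
  rw [winTerm_eq_mul, winTerm_eq_mul]
  refine mul_le_mul_of_nonneg_right (exp_le_exp.2 ?_)
    (sub_nonneg.2 (exp_neg_mul_le_one hlam (ht2 r)))
  have hsum : ∑ j ∈ range r, (t1 j + t2 j) + t1 r ≤ ∑ j ∈ range r, (t1' j + t2 j) + t1' r :=
    add_le_add (sum_le_sum fun j _ => add_le_add_left (h j) _) (h r)
  exact mul_le_mul_of_nonpos_left hsum (neg_nonpos.2 hlam)

theorem winProb_antitone {t1' : ℕ → ℝ} (hlam : 0 ≤ lam) (ht1 : ∀ j, 0 ≤ t1 j)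
    (ht2 : ∀ j, 0 ≤ t2 j) (h : t1 ≤ t1') : winProb lam t1' t2 ≤ winProb lam t1 t2 := by
  rw [winProb_eq_tsum_winTerm, winProb_eq_tsum_winTerm]
  exact Summable.tsum_le_tsum (winTerm_antitone hlam ht2 h)
    (summable_winTerm hlam (fun j => (ht1 j).trans (h j)) ht2) (summable_winTerm hlam ht1 ht2)

end

/-- Theorem 2 (n = 2, m = 1): the strategic player's winning probability is
nonincreasing in each of his waiting times `t₁^i`, so it is maximized by
taking every `t₁^i → 0`. -/
theorem stmt9 (lam : ℝ) (hlam : 0 < lam) (t1 t2 : ℕ → ℝ)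
    (ht1 : ∀ j, 0 ≤ t1 j) (ht2 : ∀ j, 0 ≤ t2 j)
    (i : ℕ) (t1' : ℕ → ℝ) (hEq : ∀ j ≠ i, t1' j = t1 j) (hGe : t1 i ≤ t1' i) :
    winProb lam t1' t2 ≤ winProb lam t1 t2 := by
  refine winProb_antitone hlam.le ht1 ht2 fun j => ?_
  rcases eq_or_ne j i with rfl | hj
  · exact hGe
  · exact (hEq j hj).ge
end
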